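/- Let S be a positive definite symmetric 2×2 real matrix, T a symmetric 2×2 real matrix, β, c ∈ ℝ, and a = a(β) = (β,1)ᵀ. Then the function x ↦ trace( (S⁻¹(T − cS − x·aaᵀ))² ), defined for x ∈ ℝ, is uniquely minimized at x̂ = (Q_T(β) − c)/(aᵀS⁻¹a), where Q_T(β) = (aᵀ S⁻¹ T S⁻¹ a)/(aᵀ S⁻¹ a), and its minimum value equals trace( (S⁻¹T − c·I₂)² ) − (Q_T(β) − c)². -/

import Mathlib

/-!
Since `S⁻¹ (T - c S - x a aᵀ) = (S⁻¹ T - c I) - x (S⁻¹ a) aᵀ` and the perturbation has rank one,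
`f` is the quadratic `trace((S⁻¹T - cI)²) - 2x(q - cs) + x²s²` with `s = aᵀS⁻¹a > 0` and
`q = aᵀS⁻¹TS⁻¹a`. Completing the square gives the minimiser `(q - cs)/s²` and the minimum
`trace((S⁻¹T - cI)²) - ((q - cs)/s)²`, and `(q - cs)/s = Q_T(β) - c`.
-/

open Matrix

/-- `a(β) = (β, 1)ᵀ`. -/
def aVec (β : ℝ) : Fin 2 → ℝ := ![β, 1]

/-- `Q_T(β) = (a(β)ᵀ S⁻¹ T S⁻¹ a(β))/(a(β)ᵀ S⁻¹ a(β))`. -/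
noncomputable def QT (S T : Matrix (Fin 2) (Fin 2) ℝ) (β : ℝ) : ℝ :=
  (aVec β ⬝ᵥ (S⁻¹ * T * S⁻¹).mulVec (aVec β)) / (aVec β ⬝ᵥ S⁻¹.mulVec (aVec β))

section
variable {n R : Type*} [Fintype n] [DecidableEq n] [CommRing R]

theorem trace_vecMulVec_sq (u v : n → R) : ((vecMulVec u v) ^ 2).trace = (v ⬝ᵥ u) ^ 2 := by
  rw [sq, vecMulVec_mul_vecMulVec, trace_vecMulVec, dotProduct_smul, smul_eq_mul,
    dotProduct_comm, sq]

theorem trace_sq_sub_smul_vecMulVec (A : Matrix n n R) (u v : n → R) (x : R) :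
    ((A - x • vecMulVec u v) ^ 2).trace =
      (A ^ 2).trace - 2 * x * (v ⬝ᵥ A *ᵥ u) + x ^ 2 * (v ⬝ᵥ u) ^ 2 := by
  have hcross : (A * vecMulVec u v).trace = v ⬝ᵥ A *ᵥ u := by
    rw [mul_vecMulVec, trace_vecMulVec, dotProduct_comm]
  have hexpand : (A - x • vecMulVec u v) ^ 2 =
      A ^ 2 - x • (A * vecMulVec u v + vecMulVec u v * A) + x ^ 2 • (vecMulVec u v) ^ 2 := by
    simp only [sq, sub_mul, mul_sub, Matrix.smul_mul, Matrix.mul_smul, smul_smul]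
    module
  rw [hexpand, trace_add, trace_sub, trace_smul, trace_smul, trace_add, trace_mul_comm _ A,
    hcross, trace_vecMulVec_sq, smul_eq_mul, smul_eq_mul]
  ring

theorem trace_sq_inv_mul_sub_smul_sub_smul_vecMulVec {S : Matrix n n R}
    (hS : IsUnit S.det) (T : Matrix n n R) (u : n → R) (c x : R) :
    ((S⁻¹ * (T - c • S - x • vecMulVec u u)) ^ 2).trace =
      ((S⁻¹ * T - c • 1) ^ 2).trace - 2 * x * (u ⬝ᵥ (S⁻¹ * T * S⁻¹) *ᵥ u - c * (u ⬝ᵥ S⁻¹ *ᵥ u))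
        + x ^ 2 * (u ⬝ᵥ S⁻¹ *ᵥ u) ^ 2 := by
  rw [mul_sub, mul_sub, Matrix.mul_smul, Matrix.mul_smul, nonsing_inv_mul S hS, mul_vecMulVec,
    trace_sq_sub_smul_vecMulVec, mulVec_mulVec, sub_mul, Matrix.smul_mul, Matrix.one_mul,
    sub_mulVec, smul_mulVec, dotProduct_sub, dotProduct_smul, smul_eq_mul]

end

theorem quadratic_isUniqueMin {C p s : ℝ} (hs : s ≠ 0) :
    let g : ℝ → ℝ := fun x => C - 2 * x * p + x ^ 2 * s ^ 2
    g (p / s ^ 2) = C - (p / s) ^ 2 ∧ ∀ x, x ≠ p / s ^ 2 → g (p / s ^ 2) < g x := by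
  intro g
  have hsquare (x : ℝ) : g x = C - (p / s) ^ 2 + ((x - p / s ^ 2) * s) ^ 2 := by
    simp only [g]
    field_simp
    ring
  have hvertex : g (p / s ^ 2) = C - (p / s) ^ 2 := by
    rw [hsquare, sub_self, zero_mul]
    ring
  refine ⟨hvertex, fun x hx => ?_⟩
  have : (x - p / s ^ 2) * s ≠ 0 := mul_ne_zero (sub_ne_zero.mpr hx) hs
  rw [hvertex, hsquare]
  exact lt_add_of_pos_right _ (by positivity)

theorem aVec_ne_zero (β : ℝ) : aVec β ≠ 0 := fun h => by simpa [aVec] using congrFun h 1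

theorem stmt_10_general (S T : Matrix (Fin 2) (Fin 2) ℝ) (hS : S.PosDef)
    (β c : ℝ) :
    letI f : ℝ → ℝ := fun x =>
      ((S⁻¹ * (T - c • S - x • vecMulVec (aVec β) (aVec β))) ^ 2).trace
    letI xhat : ℝ := (QT S T β - c) / (aVec β ⬝ᵥ S⁻¹.mulVec (aVec β))
    f xhat = ((S⁻¹ * T - c • (1 : Matrix (Fin 2) (Fin 2) ℝ)) ^ 2).trace -
        (QT S T β - c) ^ 2 ∧
      ∀ x : ℝ, x ≠ xhat → f xhat < f x := by
  set s := aVec β ⬝ᵥ S⁻¹ *ᵥ aVec β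
  set q := aVec β ⬝ᵥ (S⁻¹ * T * S⁻¹) *ᵥ aVec β
  have hs : s ≠ 0 := (hS.inv.dotProduct_mulVec_pos (aVec_ne_zero β)).ne'
  have hQ : QT S T β - c = (q - c * s) / s := by
    change q / s - c = _
    field_simp
  have hf (x : ℝ) : ((S⁻¹ * (T - c • S - x • vecMulVec (aVec β) (aVec β))) ^ 2).trace =
      ((S⁻¹ * T - c • 1) ^ 2).trace - 2 * x * (q - c * s) + x ^ 2 * s ^ 2 :=
    trace_sq_inv_mul_sub_smul_sub_smul_vecMulVec hS.det_pos.ne'.isUnit T _ c x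
  rw [hQ, div_div, ← sq]
  simp only [hf]
  exact quadratic_isUniqueMin hs

/-- `x ↦ trace((S⁻¹(T − cS − x·aaᵀ))²)` is uniquely minimized at
`x̂ = (Q_T(β) − c)/(aᵀS⁻¹a)` with minimal value `trace((S⁻¹T − cI)²) − (Q_T(β) − c)²`. -/
theorem stmt_10 (S T : Matrix (Fin 2) (Fin 2) ℝ) (hS : S.PosDef) (hT : T.IsSymm)
    (β c : ℝ) :
    letI f : ℝ → ℝ := fun x =>
      ((S⁻¹ * (T - c • S - x • vecMulVec (aVec β) (aVec β))) ^ 2).trace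
    letI xhat : ℝ := (QT S T β - c) / (aVec β ⬝ᵥ S⁻¹.mulVec (aVec β))
    f xhat = ((S⁻¹ * T - c • (1 : Matrix (Fin 2) (Fin 2) ℝ)) ^ 2).trace -
        (QT S T β - c) ^ 2 ∧
      ∀ x : ℝ, x ≠ xhat → f xhat < f x :=
  stmt_10_general S T hS β c
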